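/- arXiv:1602.07790 — 2 statements merged into one kernel-verified Lean document; each statement's English description precedes it below -/
import Mathlib

section
/- Let r ≥ 1, let (a_0, …, a_r) be 𝓑_r-data on a ℂ-vector space M, let β ∈ ℂ, and let N be a ℂ-subspace of M ⊗ ℂ[t] invariant under D_m for every m ∈ ℤ, where D_m are the operators of F(M, Ω(1,β)). If u = Σ_{n=0}^{l} v_n ⊗ h^n_0 ∈ N (with v_0, …, v_l ∈ M), then Σ_{n=0}^{l} (a_r² v_n) ⊗ h^n_m ∈ N for every m ∈ ℤ. -/
open Polynomial TensorProduct

/-- The shift operator `f(t) ↦ f(t - m)` on `ℂ[t]`. -/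
noncomputable def shiftOp (m : ℤ) : Module.End ℂ (Polynomial ℂ) :=
  (Polynomial.aeval (Polynomial.X - Polynomial.C (m : ℂ))).toLinearMap

/-- The operator `X_m^λ : f(t) ↦ λ^m f(t - m)` of `Ω(λ,β)`. -/
noncomputable def XOp (l : ℂ) (m : ℤ) : Module.End ℂ (Polynomial ℂ) :=
  (l ^ m) • shiftOp m

/-- The operator `D_m^{λ,β} : f(t) ↦ λ^m (t - βm) f(t - m)` of `Ω(λ,β)`. -/
noncomputable def DOp (l b : ℂ) (m : ℤ) : Module.End ℂ (Polynomial ℂ) :=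
  (l ^ m) • ((LinearMap.mulLeft ℂ (Polynomial.X - Polynomial.C (b * (m : ℂ)))) ∘ₗ shiftOp m)

/-- `𝓑_r`-data on a ℂ-vector space `M`. -/
structure BrData (r : ℕ) (M : Type*) [AddCommGroup M] [Module ℂ M] where
  a : Fin (r + 1) → Module.End ℂ M
  rel : ∀ i j : Fin (r + 1), ∀ h : (i : ℕ) + (j : ℕ) ≤ r,
    a i * a j - a j * a i
      = (((j : ℕ) : ℂ) - ((i : ℕ) : ℂ)) • a ⟨(i : ℕ) + (j : ℕ), Nat.lt_succ_of_le h⟩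
  comm : ∀ i j : Fin (r + 1), r < (i : ℕ) + (j : ℕ) → a i * a j = a j * a i

/-- The operator `g(m) = Σ_{i=0}^r (m^{i+1}/(i+1)!)·a_i`. -/
noncomputable def gOp {r : ℕ} {M : Type*} [AddCommGroup M] [Module ℂ M]
    (B : BrData r M) (m : ℤ) : Module.End ℂ M :=
  ∑ i : Fin (r + 1), (((m : ℂ) ^ ((i : ℕ) + 1)) / (Nat.factorial ((i : ℕ) + 1) : ℂ)) • B.a i

/-- The operator `D_m` of the Virasoro module `F(M, Ω(λ,β)) = M ⊗ ℂ[t]`: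
`D_m(v ⊗ f) = v ⊗ λ^m(t − βm)f(t − m) + g(m)v ⊗ λ^m f(t − m)`. -/
noncomputable def DF {r : ℕ} {M : Type*} [AddCommGroup M] [Module ℂ M]
    (B : BrData r M) (l b : ℂ) (m : ℤ) : Module.End ℂ (M ⊗[ℂ] Polynomial ℂ) :=
  TensorProduct.map LinearMap.id (DOp l b m) + TensorProduct.map (gOp B m) (XOp l m)

/-- The polynomial `h^n_m = ∏_{j=m+1}^{m+n} (t − j)`, with `h^0_m = 1`. -/
noncomputable def hpoly (m : ℤ) (n : ℕ) : Polynomial ℂ :=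
  ∏ j ∈ Finset.range n, (Polynomial.X - Polynomial.C ((m : ℂ) + (j : ℂ) + 1))

/-!
For `k ∈ ℤ` the composite `D_{m-k} ∘ D_k` equals `P(k) ∘ S_m`, where `S_m` is the shift
`f(t) ↦ f(t - m)` and `P(k) = (t - β(m-k) + g(m-k)) (t - (m-k) - βk + g(k))` is a polynomial in `k`
with coefficients in `End(M ⊗ ℂ[t])`, of degree `2r + 2` with leading coefficient
`(-1)^{r+1} ((r+1)!)^{-2} a_r²` (the terms in `β` have degree `1 < r + 1`). As `N` is stable
under every `D_{m-k} ∘ D_k`, the vector `P(k) (S_m u)` lies in `N` for every `k`; a polynomial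
with vector coefficients whose values lie in `N` at all natural numbers has all its coefficients
in `N` (test it against linear forms vanishing on `N`). The top coefficient is a nonzero
multiple of `a_r² (S_m u)`, and `S_m u = Σ v_n ⊗ h^n_m`.
-/

section

variable {K A : Type*} [Field K] [Ring A] [Algebra K A]

noncomputable def scalarEval (z : K) : A[X] →+* A :=
  eval₂RingHom' (RingHom.id A) (algebraMap K A z) (Algebra.commute_algebraMap_right z)

theorem scalarEval_apply (z : K) (Q : A[X]) : scalarEval z Q = Q.eval (algebraMap K A z) := rfl

@[simp] theorem scalarEval_C (z : K) (a : A) : scalarEval z (C a) = a := eval_C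

theorem scalarEval_map_algebraMap (z : K) (p : K[X]) :
    scalarEval z (p.map (algebraMap K A)) = algebraMap K A (p.eval z) := by
  rw [scalarEval_apply, eval_map, eval₂_at_apply]

end

section

variable {K V : Type*} [Field K] [AddCommGroup V] [Module K V]

theorem Submodule.mem_of_forall_sum_pow_smul_mem [CharZero K] (N : Submodule K V) (c : ℕ → V)
    {n : ℕ} (h : ∀ k : ℕ, ∑ i ∈ Finset.range n, (k : K) ^ i • c i ∈ N) {i : ℕ} (hi : i < n) :
    c i ∈ N := by
  rw [← N.ker_mkQ, LinearMap.mem_ker, ← Module.forall_dual_apply_eq_zero_iff K]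
  intro φ
  let P : K[X] := ∑ j ∈ Finset.range n, monomial j (φ (N.mkQ (c j)))
  have hroot : ∀ k : ℕ, P.IsRoot k := fun k => by
    have hk : N.mkQ (∑ i ∈ Finset.range n, (k : K) ^ i • c i) = 0 := by
      rw [← LinearMap.mem_ker, N.ker_mkQ]; exact h k
    simpa [P, eval_finsetSum, mul_comm] using congrArg φ hk
  have hP : P = 0 := eq_zero_of_infinite_isRoot P <|
    (Set.infinite_range_of_injective Nat.cast_injective).mono (by rintro _ ⟨k, rfl⟩; exact hroot k)
  simpa [P, finsetSum_coeff, coeff_monomial, hi] using congrArg (coeff · i) hP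

theorem scalarEval_apply_eq_sum (z : K) (Q : (Module.End K V)[X]) (x : V) :
    scalarEval z Q x = ∑ i ∈ Finset.range (Q.natDegree + 1), z ^ i • Q.coeff i x := by
  simp [scalarEval_apply, eval_eq_sum_range, ← map_pow, Module.algebraMap_end_apply]

theorem coeff_apply_mem_of_forall_scalarEval_apply_mem [CharZero K] (N : Submodule K V)
    (Q : (Module.End K V)[X]) (x : V) (h : ∀ k : ℕ, scalarEval (k : K) Q x ∈ N) (d : ℕ) :
    Q.coeff d x ∈ N := by
  rcases lt_or_ge d (Q.natDegree + 1) with hd | hd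
  · refine N.mem_of_forall_sum_pow_smul_mem (fun i => Q.coeff i x) (fun k => ?_) hd
    simpa only [scalarEval_apply_eq_sum] using h k
  · rw [coeff_eq_zero_of_natDegree_lt (by omega), LinearMap.zero_apply]
    exact N.zero_mem

end

section

variable {r : ℕ} {M : Type*} [AddCommGroup M] [Module ℂ M]

theorem shiftOp_mul (s k : ℤ) : shiftOp s * shiftOp k = shiftOp (s + k) := by
  refine LinearMap.ext fun f => ?_
  simp only [Module.End.mul_apply, shiftOp, AlgHom.toLinearMap_apply, ← aeval_algHom_apply,
    map_sub, aeval_X, aeval_C, algebraMap_eq]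
  push_cast [sub_sub, C_add]
  rfl

theorem shiftOp_X_mul (s : ℤ) (f : ℂ[X]) :
    shiftOp s (X * f) = X * shiftOp s f - (s : ℂ) • shiftOp s f := by
  simp [shiftOp, sub_mul, smul_eq_C_mul]

theorem shiftOp_hpoly (s m : ℤ) (n : ℕ) : shiftOp s (hpoly m n) = hpoly (m + s) n := by
  simp only [shiftOp, AlgHom.toLinearMap_apply, hpoly, map_prod, map_sub, aeval_X, aeval_C]
  refine Finset.prod_congr rfl fun j _ => ?_
  rw [algebraMap_eq, sub_sub, ← C_add]
  congr 2
  push_cast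
  ring

variable (M) in
noncomputable def tensorMulX : Module.End ℂ (M ⊗[ℂ] ℂ[X]) := (LinearMap.mulLeft ℂ X).lTensor M

variable (M) in
noncomputable def tensorShift (k : ℤ) : Module.End ℂ (M ⊗[ℂ] ℂ[X]) := (shiftOp k).lTensor M

noncomputable def dFactor (B : BrData r M) (c : ℂ) (k : ℤ) : Module.End ℂ (M ⊗[ℂ] ℂ[X]) :=
  tensorMulX M - c • 1 + (gOp B k).rTensor ℂ[X]

theorem DF_one_eq (B : BrData r M) (b : ℂ) (k : ℤ) :
    DF B 1 b k = dFactor B (b * k) k * tensorShift M k := by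
  refine TensorProduct.ext' fun v f => ?_
  simp only [DF, DOp, XOp, dFactor, tensorMulX, tensorShift, one_zpow, one_smul,
    LinearMap.add_apply, LinearMap.sub_apply, LinearMap.smul_apply, Module.End.mul_apply, map_tmul,
    LinearMap.comp_apply, LinearMap.id_apply, LinearMap.mulLeft_apply, LinearMap.lTensor_tmul,
    LinearMap.rTensor_tmul, sub_mul, ← smul_eq_C_mul, tmul_sub, tmul_smul, Module.End.one_apply]

theorem tensorShift_mul_dFactor (B : BrData r M) (s : ℤ) (c : ℂ) (k : ℤ) :
    tensorShift M s * dFactor B c k = dFactor B (c + s) k * tensorShift M s := by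
  refine TensorProduct.ext' fun v f => ?_
  simp only [dFactor, tensorMulX, tensorShift, LinearMap.add_apply, LinearMap.sub_apply,
    LinearMap.smul_apply, Module.End.mul_apply, LinearMap.mulLeft_apply, LinearMap.lTensor_tmul,
    LinearMap.rTensor_tmul, Module.End.one_apply, map_add, map_sub, map_smul, shiftOp_X_mul,
    tmul_sub, tmul_smul, add_smul]
  abel

theorem tensorShift_mul (s k : ℤ) : tensorShift M s * tensorShift M k = tensorShift M (s + k) := by
  rw [tensorShift, tensorShift, ← LinearMap.lTensor_mul, shiftOp_mul, tensorShift]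

theorem DF_sub_mul_DF (B : BrData r M) (b : ℂ) (m k : ℤ) :
    DF B 1 b (m - k) * DF B 1 b k
      = dFactor B (b * ↑(m - k)) (m - k) * dFactor B (b * k + ↑(m - k)) k * tensorShift M m := by
  rw [DF_one_eq, DF_one_eq, mul_assoc, ← mul_assoc (tensorShift M (m - k)), tensorShift_mul_dFactor,
    mul_assoc, tensorShift_mul, sub_add_cancel, ← mul_assoc]

noncomputable def gOpPoly (B : BrData r M) (q : ℂ[X]) : (Module.End ℂ (M ⊗[ℂ] ℂ[X]))[X] :=
  ∑ i : Fin (r + 1), C ((((i : ℕ) + 1).factorial : ℂ)⁻¹ • (B.a i).rTensor ℂ[X]) *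
    (q ^ ((i : ℕ) + 1)).map (algebraMap ℂ _)

theorem scalarEval_gOpPoly (B : BrData r M) (q : ℂ[X]) {z : ℂ} {k : ℤ} (hk : q.eval z = k) :
    scalarEval z (gOpPoly B q) = (gOp B k).rTensor ℂ[X] := by
  change _ = Module.End.rTensorAlgHom ℂ M ℂ[X] (gOp B k)
  simp only [gOpPoly, gOp, map_sum, map_mul, map_smul, scalarEval_C, scalarEval_map_algebraMap,
    eval_pow, hk, Algebra.algebraMap_eq_smul_one, mul_smul_comm, mul_one, smul_smul]
  refine Finset.sum_congr rfl fun i _ => ?_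
  rw [div_eq_inv_mul, mul_comm]
  rfl

theorem natDegree_gOpPoly_le (B : BrData r M) {q : ℂ[X]} (hq : q.natDegree ≤ 1) :
    (gOpPoly B q).natDegree ≤ r + 1 :=
  natDegree_sum_le_of_forall_le _ _ fun i _ => (natDegree_C_mul_le _ _).trans <|
    natDegree_map_le.trans <| (natDegree_pow_le_of_le _ hq).trans (by omega)

theorem coeff_gOpPoly (B : BrData r M) {q : ℂ[X]} (hq : q.natDegree ≤ 1) :
    (gOpPoly B q).coeff (r + 1)
      = (q.coeff 1 ^ (r + 1) * ((r + 1).factorial : ℂ)⁻¹) • (B.a (Fin.last r)).rTensor ℂ[X] := by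
  rw [gOpPoly, finsetSum_coeff, Fin.sum_univ_castSucc, Finset.sum_eq_zero, zero_add]
  · have hlead := coeff_pow_of_natDegree_le (m := r + 1) hq
    rw [mul_one] at hlead
    rw [coeff_C_mul, coeff_map, Fin.val_last, hlead, Algebra.algebraMap_eq_smul_one, mul_smul_comm,
      mul_one, smul_smul, mul_comm]
  · intro i _
    rw [coeff_C_mul, coeff_map, coeff_eq_zero_of_natDegree_lt, map_zero, mul_zero]
    exact (natDegree_pow_le_of_le _ hq).trans_lt (by simp)

noncomputable def dFactorPoly (B : BrData r M) (p q : ℂ[X]) : (Module.End ℂ (M ⊗[ℂ] ℂ[X]))[X] :=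
  C (tensorMulX M) - p.map (algebraMap ℂ _) + gOpPoly B q

theorem scalarEval_dFactorPoly (B : BrData r M) (p q : ℂ[X]) {z : ℂ} {k : ℤ}
    (hk : q.eval z = k) : scalarEval z (dFactorPoly B p q) = dFactor B (p.eval z) k := by
  rw [dFactorPoly, map_add, map_sub, scalarEval_C, scalarEval_map_algebraMap,
    scalarEval_gOpPoly B q hk, dFactor, Algebra.algebraMap_eq_smul_one]

theorem natDegree_dFactorPoly_le (B : BrData r M) {p q : ℂ[X]} (hp : p.natDegree ≤ 1)
    (hq : q.natDegree ≤ 1) : (dFactorPoly B p q).natDegree ≤ r + 1 := by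
  have hC : (C (tensorMulX M)).natDegree ≤ r + 1 := by rw [natDegree_C]; omega
  have hP : (p.map (algebraMap ℂ (Module.End ℂ (M ⊗[ℂ] ℂ[X])))).natDegree ≤ r + 1 :=
    natDegree_map_le.trans (by omega)
  exact natDegree_add_le_of_degree_le ((natDegree_sub_le_of_le hC hP).trans (max_self _).le)
    (natDegree_gOpPoly_le B hq)

theorem coeff_dFactorPoly (B : BrData r M) (hr : 1 ≤ r) {p q : ℂ[X]} (hp : p.natDegree ≤ 1)
    (hq : q.natDegree ≤ 1) : (dFactorPoly B p q).coeff (r + 1)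
      = (q.coeff 1 ^ (r + 1) * ((r + 1).factorial : ℂ)⁻¹) • (B.a (Fin.last r)).rTensor ℂ[X] := by
  rw [dFactorPoly, coeff_add, coeff_sub, coeff_C_of_ne_zero (by omega), coeff_map,
    coeff_eq_zero_of_natDegree_lt (hp.trans_lt (by omega)), map_zero, sub_zero, zero_add,
    coeff_gOpPoly B hq]

theorem rTensor_tensorShift_sum_tmul_hpoly (f : Module.End ℂ M) (m : ℤ) (s : Finset ℕ)
    (v : ℕ → M) : f.rTensor ℂ[X] (tensorShift M m (∑ n ∈ s, v n ⊗ₜ hpoly 0 n))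
      = ∑ n ∈ s, f (v n) ⊗ₜ hpoly m n := by
  simp [tensorShift, shiftOp_hpoly]

noncomputable def pairPoly (B : BrData r M) (b : ℂ) (m : ℤ) : (Module.End ℂ (M ⊗[ℂ] ℂ[X]))[X] :=
  dFactorPoly B (C b * (C (m : ℂ) - X)) (C (m : ℂ) - X) *
    dFactorPoly B (C b * X + (C (m : ℂ) - X)) X

theorem DF_sub_mul_DF_eq_scalarEval (B : BrData r M) (b : ℂ) (m k : ℤ) :
    DF B 1 b (m - k) * DF B 1 b k = scalarEval (k : ℂ) (pairPoly B b m) * tensorShift M m := by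
  have h1 : (C (m : ℂ) - X).eval (k : ℂ) = ((m - k : ℤ) : ℂ) := by simp
  have h2 : (X : ℂ[X]).eval (k : ℂ) = ((k : ℤ) : ℂ) := eval_X
  rw [DF_sub_mul_DF, pairPoly, map_mul, scalarEval_dFactorPoly B _ _ h1,
    scalarEval_dFactorPoly B _ _ h2]
  push_cast
  simp

theorem coeff_pairPoly (B : BrData r M) (hr : 1 ≤ r) (b : ℂ) (m : ℤ) :
    (pairPoly B b m).coeff (2 * r + 2)
      = ((-1) ^ (r + 1) * (((r + 1).factorial : ℂ)⁻¹) ^ 2) •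
          (B.a (Fin.last r) ^ 2).rTensor ℂ[X] := by
  rw [show 2 * r + 2 = (r + 1) + (r + 1) by ring, pairPoly,
    coeff_mul_add_eq_of_natDegree_le
      (natDegree_dFactorPoly_le B (by compute_degree) (by compute_degree))
      (natDegree_dFactorPoly_le B (by compute_degree) (by compute_degree)),
    coeff_dFactorPoly B hr (by compute_degree) (by compute_degree),
    coeff_dFactorPoly B hr (by compute_degree) (by compute_degree), smul_mul_smul_comm,
    ← sq, LinearMap.rTensor_pow]
  congr 1
  rw [coeff_sub, coeff_C_of_ne_zero one_ne_zero, coeff_X_one]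
  ring

end

/-- Claim 1: if `N ⊆ M ⊗ ℂ[t]` is invariant under all operators of
`F(M, Ω(1,β))` and `u = Σ_{n=0}^{l} v_n ⊗ h^n_0 ∈ N`, then
`Σ_{n=0}^{l} (a_r² v_n) ⊗ h^n_m ∈ N` for every `m ∈ ℤ`. -/
theorem claim1 {r : ℕ} (hr : 1 ≤ r) {M : Type*} [AddCommGroup M] [Module ℂ M]
    (B : BrData r M) (b : ℂ)
    (N : Submodule ℂ (M ⊗[ℂ] Polynomial ℂ))
    (hN : ∀ m : ℤ, ∀ u ∈ N, DF B 1 b m u ∈ N)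
    (L : ℕ) (v : ℕ → M)
    (hu : (∑ n ∈ Finset.range (L + 1), v n ⊗ₜ[ℂ] hpoly 0 n) ∈ N) :
    ∀ m : ℤ,
      (∑ n ∈ Finset.range (L + 1),
        ((B.a (Fin.last r) ^ 2) (v n)) ⊗ₜ[ℂ] hpoly m n) ∈ N := by
  intro m
  have hvalues : ∀ k : ℕ, scalarEval (k : ℂ) (pairPoly B b m)
      (tensorShift M m (∑ n ∈ Finset.range (L + 1), v n ⊗ₜ[ℂ] hpoly 0 n)) ∈ N := fun k => by
    have h := hN (m - k) _ (hN k _ hu)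
    rwa [← Module.End.mul_apply, DF_sub_mul_DF_eq_scalarEval, Int.cast_natCast,
      Module.End.mul_apply] at h
  have hlead := coeff_apply_mem_of_forall_scalarEval_apply_mem N _ _ hvalues (2 * r + 2)
  rwa [coeff_pairPoly B hr, LinearMap.smul_apply,
    Submodule.smul_mem_iff _ (by simp [Nat.factorial_ne_zero]),
    rTensor_tensorShift_sum_tmul_hpoly] at hlead
end

section
/- Let r ∈ ℕ, let (a_0, …, a_r) be 𝓑_r-data on a ℂ-vector space M, and let λ ∈ ℂ \ {0}, β ∈ ℂ. For the operators D_m of F(M, Ω(λ,β)) on M ⊗ ℂ[t] the following hold for all m, n ∈ ℤ and all v ∈ M: (i) the range of D_0 − n·id equals M ⊗ (t − n)ℂ[t]; (ii) D_m maps M ⊗ (t − n)ℂ[t] into M ⊗ (t − n − m)ℂ[t]; (iii) D_m(v ⊗ λ^n·1) − ((n + (1−β)m)·v + g(m)v) ⊗ λ^{n+m}·1 ∈ M ⊗ (t − n − m)ℂ[t]. Consequently 𝔚(F(M, Ω(λ,β))) ≅ F(M, A(0, 1−β)) as Virasoro modules. -/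
open Polynomial TensorProduct DirectSum

/-- The ideal `(t − n)·ℂ[t]` viewed as a ℂ-subspace of `ℂ[t]`. -/
noncomputable def Isub (n : ℤ) : Submodule ℂ (Polynomial ℂ) :=
  (Ideal.span {Polynomial.X - Polynomial.C ((n : ℤ) : ℂ)}).restrictScalars ℂ

/-- The subspace `M ⊗ (t − n)ℂ[t]` of `M ⊗ ℂ[t]`. -/
noncomputable def Iten (M : Type*) [AddCommGroup M] [Module ℂ M] (n : ℤ) :
    Submodule ℂ (M ⊗[ℂ] Polynomial ℂ) :=
  LinearMap.range (LinearMap.lTensor M (Isub n).subtype)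

/-!
Everything is read off through the evaluation maps `ε_n : M ⊗ ℂ[t] → M`, `v ⊗ f ↦ f(n) v`.
Right exactness of `M ⊗ -` identifies `ker ε_n` both with `M ⊗ (t − n)ℂ[t]` and with the range of
`D_0 − n = id ⊗ (t − n)`. A direct computation gives
`ε_{n+m} ∘ D_m = λ^m (n + (1 − β)m + g(m)) ∘ ε_n`, which yields (ii) and (iii). Finally `λ^{-n} ε_n`
identifies the `n`-th summand of `𝔚(F(M, Ω(λ,β)))` with `M ⊗ x^n`, and the same identity says that
these identifications intertwine `D_m` with the operators of `F(M, A(0, 1 − β))`.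
-/

section Polynomial

lemma eval_shiftOp (m : ℤ) (f : ℂ[X]) (a : ℂ) : (shiftOp m f).eval a = f.eval (a - m) := by
  simp [shiftOp, ← Polynomial.comp_eq_aeval]

lemma eval_DOp (l b : ℂ) (m : ℤ) (f : ℂ[X]) (a : ℂ) :
    (DOp l b m f).eval a = l ^ m * ((a - b * m) * f.eval (a - m)) := by
  simp [DOp, eval_shiftOp, mul_comm]

lemma eval_XOp (l : ℂ) (m : ℤ) (f : ℂ[X]) (a : ℂ) :
    (XOp l m f).eval a = l ^ m * f.eval (a - m) := by
  simp [XOp, eval_shiftOp]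

lemma DOp_zero (l b : ℂ) : DOp l b 0 = LinearMap.mulLeft ℂ X := by
  ext f : 1
  simp [DOp, shiftOp, Polynomial.aeval_X_left]

variable {R : Type*} [CommRing R]

lemma Polynomial.leval_surjective (c : R) : Function.Surjective (Polynomial.leval c) :=
  fun a => ⟨C a, eval_C⟩

lemma Polynomial.exact_mulLeft_X_sub_C_leval (c : R) :
    Function.Exact (LinearMap.mulLeft R (X - C c)) (Polynomial.leval c) := by
  intro p
  rw [Polynomial.leval_apply, ← Polynomial.IsRoot.def, ← Polynomial.dvd_iff_isRoot]
  exact ⟨fun ⟨q, hq⟩ => ⟨q, hq.symm⟩, fun ⟨q, hq⟩ => ⟨q, hq.symm⟩⟩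

lemma exact_Isub_subtype_leval (n : ℤ) :
    Function.Exact (Isub n).subtype (Polynomial.leval (n : ℂ)) := by
  rw [LinearMap.exact_iff, Submodule.range_subtype]
  ext p
  simp only [LinearMap.mem_ker, Polynomial.leval_apply, Isub, Submodule.restrictScalars_mem,
    Ideal.mem_span_singleton, Polynomial.dvd_iff_isRoot, Polynomial.IsRoot.def]

end Polynomial

section TensorEval

variable (R : Type*) [CommRing R] (M : Type*) [AddCommGroup M] [Module R M]

noncomputable def tensorEval (c : R) : M ⊗[R] R[X] →ₗ[R] M :=
  TensorProduct.rid R M ∘ₗ LinearMap.lTensor M (Polynomial.leval c)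

variable {R M}

@[simp]
lemma tensorEval_tmul (c : R) (v : M) (f : R[X]) : tensorEval R M c (v ⊗ₜ f) = f.eval c • v := by
  simp [tensorEval]

lemma tensorEval_surjective (c : R) : Function.Surjective (tensorEval R M c) :=
  fun v => ⟨v ⊗ₜ 1, by simp⟩

end TensorEval

section Iten

variable {M : Type*} [AddCommGroup M] [Module ℂ M]

lemma ker_tensorEval (n : ℤ) : LinearMap.ker (tensorEval ℂ M n) = Iten M n := by
  rw [tensorEval, LinearEquiv.ker_comp (TensorProduct.rid ℂ M),
    (lTensor_exact M (exact_Isub_subtype_leval n) (leval_surjective _)).linearMap_ker_eq]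
  rfl

lemma range_lTensor_mulLeft_X_sub_C (n : ℤ) :
    LinearMap.range (LinearMap.lTensor M (LinearMap.mulLeft ℂ (X - C (n : ℂ)))) = Iten M n := by
  rw [← ker_tensorEval, tensorEval, LinearEquiv.ker_comp (TensorProduct.rid ℂ M),
    (lTensor_exact M (exact_mulLeft_X_sub_C_leval _) (leval_surjective _)).linearMap_ker_eq]

end Iten

section Virasoro

variable {r : ℕ} {M : Type*} [AddCommGroup M] [Module ℂ M] (B : BrData r M)

lemma DF_tmul (l b : ℂ) (m : ℤ) (v : M) (f : ℂ[X]) :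
    DF B l b m (v ⊗ₜ f) = v ⊗ₜ DOp l b m f + gOp B m v ⊗ₜ XOp l m f := by
  simp [DF]

lemma DF_zero_sub_smul_one (l b : ℂ) (n : ℤ) :
    DF B l b 0 - (n : ℂ) • (1 : Module.End ℂ (M ⊗[ℂ] ℂ[X]))
      = LinearMap.lTensor M (LinearMap.mulLeft ℂ (X - C (n : ℂ))) := by
  refine TensorProduct.ext' fun v f => ?_
  simp [DF_tmul, DOp_zero, gOp, sub_mul, tmul_sub, ← tmul_smul, Polynomial.smul_eq_C_mul]

/-- The action of `D_m` of `F(M, A(0, 1 − β))` on `M ⊗ x^n`. -/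
noncomputable def weightOp (b : ℂ) (m n : ℤ) : Module.End ℂ M :=
  ((n : ℂ) + (1 - b) * m) • 1 + gOp B m

@[simp]
lemma weightOp_apply (b : ℂ) (m n : ℤ) (v : M) :
    weightOp B b m n v = ((n : ℂ) + (1 - b) * m) • v + gOp B m v := rfl

lemma tensorEval_DF (l b : ℂ) (m n : ℤ) (u : M ⊗[ℂ] ℂ[X]) :
    tensorEval ℂ M (n + m : ℤ) (DF B l b m u) = l ^ m • weightOp B b m n (tensorEval ℂ M n u) := by
  induction u using TensorProduct.induction_on with
  | zero => simp
  | tmul v f =>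
    simp only [DF_tmul, map_add, tensorEval_tmul, eval_DOp, eval_XOp, weightOp_apply, map_smul,
      smul_add, smul_smul]
    push_cast
    rw [add_sub_cancel_right]
    congr 1
    module
  | add u w hu hw => simp only [map_add, hu, hw, smul_add]

lemma DF_mem_Iten (l b : ℂ) (m n : ℤ) {u : M ⊗[ℂ] ℂ[X]} (hu : u ∈ Iten M n) :
    DF B l b m u ∈ Iten M (n + m) := by
  rw [← ker_tensorEval, LinearMap.mem_ker] at hu ⊢
  rw [tensorEval_DF, hu, map_zero, smul_zero]

lemma DF_tmul_C_sub_mem_Iten {l : ℂ} (hl : l ≠ 0) (b : ℂ) (m n : ℤ) (v : M) :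
    DF B l b m (v ⊗ₜ C (l ^ n)) - weightOp B b m n v ⊗ₜ C (l ^ (n + m)) ∈ Iten M (n + m) := by
  rw [← ker_tensorEval, LinearMap.mem_ker, map_sub, tensorEval_DF, tensorEval_tmul,
    tensorEval_tmul, eval_C, eval_C, map_smul, smul_smul, zpow_add₀ hl, mul_comm, sub_self]

end Virasoro

lemma DirectSum.mapRange_linearEquiv_lof {R ι : Type*} [Semiring R] [DecidableEq ι]
    {β₁ β₂ : ι → Type*} [∀ i, AddCommMonoid (β₁ i)] [∀ i, AddCommMonoid (β₂ i)]
    [∀ i, Module R (β₁ i)] [∀ i, Module R (β₂ i)] (e : ∀ i, β₁ i ≃ₗ[R] β₂ i) (i : ι) (x : β₁ i) :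
    DFinsupp.mapRange.linearEquiv e (lof R ι β₁ i x) = lof R ι β₂ i (e i x) :=
  DFinsupp.mapRange_single (hf := fun k => map_zero (e k))

section Weighting

variable (M : Type*) [AddCommGroup M] [Module ℂ M]

noncomputable def quotientItenEquiv (n : ℤ) : ((M ⊗[ℂ] ℂ[X]) ⧸ Iten M n) ≃ₗ[ℂ] M :=
  Submodule.quotEquivOfEq _ _ (ker_tensorEval n).symm ≪≫ₗ
    (tensorEval ℂ M n).quotKerEquivOfSurjective (tensorEval_surjective _)

noncomputable def weightingEquiv {l : ℂ} (hl : l ≠ 0) :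
    (⨁ n : ℤ, (M ⊗[ℂ] ℂ[X]) ⧸ Iten M n) ≃ₗ[ℂ] M ⊗[ℂ] LaurentPolynomial ℂ :=
  DFinsupp.mapRange.linearEquiv (fun n => quotientItenEquiv M n ≪≫ₗ
      LinearEquiv.smulOfNeZero ℂ M (l ^ (-n)) (zpow_ne_zero _ hl)) ≪≫ₗ
    (finsuppLEquivDirectSum ℂ M ℤ).symm ≪≫ₗ (finsuppScalarRight ℂ ℂ M ℤ).symm ≪≫ₗ
    (AddMonoidAlgebra.coeffLinearEquiv ℂ).symm.lTensor M

variable {M}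

lemma weightingEquiv_lof_mk {l : ℂ} (hl : l ≠ 0) (n : ℤ) (u : M ⊗[ℂ] ℂ[X]) :
    weightingEquiv M hl (lof ℂ ℤ (fun k => (M ⊗[ℂ] ℂ[X]) ⧸ Iten M k) n (Submodule.Quotient.mk u))
      = (l ^ (-n) • tensorEval ℂ M n u) ⊗ₜ LaurentPolynomial.T n := by
  simp only [weightingEquiv, quotientItenEquiv, LinearEquiv.trans_apply]
  rw [DirectSum.mapRange_linearEquiv_lof, finsuppLEquivDirectSum_symm_lof]
  simp

end Weighting

/-- for the operators `D_m` of `F(M, Ω(λ,β))`: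
(i) `range(D_0 − n·id) = M ⊗ (t − n)ℂ[t]`;
(ii) `D_m` maps `M ⊗ (t − n)ℂ[t]` into `M ⊗ (t − n − m)ℂ[t]`;
(iii) `D_m(v ⊗ λ^n·1) − ((n + (1−β)m)·v + g(m)v) ⊗ λ^{n+m}·1 ∈ M ⊗ (t − n − m)ℂ[t]`;
consequently `𝔚(F(M, Ω(λ,β))) ≅ F(M, A(0, 1−β))` as Virasoro modules. -/
theorem weighting_of_F_omega {r : ℕ} {M : Type*} [AddCommGroup M] [Module ℂ M]
    (B : BrData r M) (l : ℂ) (hl : l ≠ 0) (b : ℂ) :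
    (∀ n : ℤ, LinearMap.range (DF B l b 0 - (n : ℂ) • (1 : Module.End ℂ (M ⊗[ℂ] Polynomial ℂ)))
        = Iten M n) ∧
    (∀ m n : ℤ, ∀ u ∈ Iten M n, DF B l b m u ∈ Iten M (n + m)) ∧
    (∀ m n : ℤ, ∀ v : M,
      DF B l b m (v ⊗ₜ[ℂ] Polynomial.C (l ^ n))
          - ((((n : ℂ) + (1 - b) * (m : ℂ)) • v + gOp B m v) ⊗ₜ[ℂ] Polynomial.C (l ^ (n + m)))
        ∈ Iten M (n + m)) ∧
    (∀ DA : ℤ → Module.End ℂ (M ⊗[ℂ] LaurentPolynomial ℂ),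
      -- `DA` is the family of operators of `F(M, A(0, 1−β))` on `M ⊗ ℂ[x,x⁻¹]`
      (∀ (m n : ℤ) (v : M),
          DA m (v ⊗ₜ[ℂ] LaurentPolynomial.T n)
            = ((((n : ℂ) + 0 + (1 - b) * (m : ℂ)) • v + gOp B m v)
                ⊗ₜ[ℂ] LaurentPolynomial.T (n + m))) →
      ∀ h : (∀ m n p : ℤ, n + m = p → Iten M n ≤ (Iten M p).comap (DF B l b m)),
        ∃ e : (⨁ n : ℤ, (M ⊗[ℂ] Polynomial ℂ) ⧸ Iten M n) ≃ₗ[ℂ] M ⊗[ℂ] LaurentPolynomial ℂ,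
          ∀ m : ℤ,
            e.toLinearMap ∘ₗ
              (DirectSum.toModule ℂ ℤ _ (fun n =>
                (DirectSum.lof ℂ ℤ (fun k => (M ⊗[ℂ] Polynomial ℂ) ⧸ Iten M k) (n + m)) ∘ₗ
                  Submodule.mapQ (Iten M n) (Iten M (n + m)) (DF B l b m) (h m n (n + m) rfl)))
            = DA m ∘ₗ e.toLinearMap) := by
  refine ⟨fun n => ?_, fun m n u hu => DF_mem_Iten B l b m n hu,
    fun m n v => DF_tmul_C_sub_mem_Iten B hl b m n v, fun DA hDA h => ⟨weightingEquiv M hl, ?_⟩⟩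
  · rw [DF_zero_sub_smul_one, range_lTensor_mulLeft_X_sub_C]
  · intro m
    have hDA' : ∀ n v, DA m (v ⊗ₜ LaurentPolynomial.T n)
        = weightOp B b m n v ⊗ₜ LaurentPolynomial.T (n + m) := by
      simpa using hDA m
    refine DirectSum.linearMap_ext ℂ fun n => Submodule.linearMap_qext _ (LinearMap.ext fun u => ?_)
    simp only [LinearMap.comp_apply, Submodule.mkQ_apply, toModule_lof, Submodule.mapQ_apply,
      LinearEquiv.coe_coe, weightingEquiv_lof_mk, hDA', tensorEval_DF, map_smul, smul_smul,
      ← zpow_add₀ hl, show -(n + m) + m = -n by ring]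
end
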